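/- Let z ≥ 1 and κ : Fin z → ℝ. Define the arithmetic-geometric-mean minimum by amin_agm(κ) := (1/z) · Σ_i min(κ i, 0) if min_i κ i ≤ 0, and amin_agm(κ) := (∏_i (1 + κ i))^(1/z) − 1 if min_i κ i > 0. Then amin_agm(κ) ≥ 0 if and only if min_i κ i ≥ 0. -/

import Mathlib

open Classical in
/-- The arithmetic-geometric-mean minimum operator: the average of the
negative parts when some entry is nonpositive, and the geometric mean of the
shifted entries `1 + κ i`, minus `1`, when all entries are positive. -/
noncomputable def aminAgm (z : ℕ) (hz : 0 < z) (κ : Fin z → ℝ) : ℝ :=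
  if Finset.univ.inf' ⟨(⟨0, hz⟩ : Fin z), Finset.mem_univ _⟩ κ ≤ 0 then
    (1 / z : ℝ) * ∑ i, min (κ i) 0
  else (∏ i, (1 + κ i)) ^ ((1 : ℝ) / z) - 1

/-- The AGM minimum is nonnegative iff the true minimum is
nonnegative (soundness and reverse soundness). -/
theorem aminAgm_nonneg_iff (z : ℕ) (hz : 0 < z) (κ : Fin z → ℝ) :
    0 ≤ aminAgm z hz κ ↔
      0 ≤ Finset.univ.inf' ⟨(⟨0, hz⟩ : Fin z), Finset.mem_univ _⟩ κ := by
  set ne : Finset.univ.Nonempty := ⟨(⟨0, hz⟩ : Fin z), Finset.mem_univ _⟩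
  unfold aminAgm
  by_cases h : Finset.univ.inf' ne κ ≤ 0
  · rw [if_pos h]
    rcases lt_or_eq_of_le h with hlt | heq
    · constructor
      · intro hnn
        exfalso
        obtain ⟨i0, _, hi0⟩ := Finset.exists_mem_eq_inf' ne κ
        have hκ : κ i0 < 0 := hi0 ▸ hlt
        have hsum : ∑ i, min (κ i) 0 < 0 := by
          have : ∑ i, min (κ i) 0 ≤ min (κ i0) 0 + ∑ i ∈ Finset.univ.erase i0, min (κ i) 0 := by
            rw [← Finset.add_sum_erase _ _ (Finset.mem_univ i0)]
          have h2 : ∑ i ∈ Finset.univ.erase i0, min (κ i) 0 ≤ 0 :=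
            Finset.sum_nonpos fun i _ => min_le_right _ _
          have h3 : min (κ i0) 0 < 0 := by simp [hκ]
          linarith
        have hz' : (0:ℝ) < 1 / z := by positivity
        nlinarith
      · intro hnn; linarith
    · constructor
      · intro _; exact heq.ge
      · intro _
        have hall : ∀ i, 0 ≤ κ i := fun i => heq ▸ Finset.inf'_le κ (Finset.mem_univ i)
        have : ∑ i, min (κ i) 0 = 0 := Finset.sum_eq_zero fun i _ => min_eq_right (hall i)
        simp [this]
  · rw [if_neg h]
    push_neg at h
    constructor
    · intro _; exact h.le
    · intro _
      have hall : ∀ i, 0 < κ i := fun i =>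
        lt_of_lt_of_le h (Finset.inf'_le κ (Finset.mem_univ i))
      have hprod : (1:ℝ) ≤ ∏ i, (1 + κ i) := by
        have := Finset.prod_le_prod (s := Finset.univ) (f := fun _ : Fin z => (1:ℝ)) (g := fun i => 1 + κ i)
          (by intro i _; norm_num) (by intro i _; linarith [hall i])
        simpa using this
      have : (1:ℝ) ≤ (∏ i, (1 + κ i)) ^ ((1 : ℝ) / z) :=
        Real.one_le_rpow hprod (by positivity)
      linarith
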